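/- arXiv:2504.12787 — 2 statements merged into one kernel-verified Lean document; each statement's English description precedes it below -/
import Mathlib

section
/- Let G be a finite abelian group of order coprime to q and d a divisor of exp(G). Then ord(q mod d) divides |I_d(G)|, where I_d(G) is the set of group homomorphisms from G to \bar{𝔽}_q^× whose image has order exactly d. -/
open MulAction

/-- A finite free action: the group's cardinality divides the set's. -/
lemma free_card_dvd {H β : Type*} [Group H] [MulAction H β] [Finite β] [Finite H]
    (hfree : ∀ (h : H) (b : β), h • b = b → h = 1) :
    Nat.card H ∣ Nat.card β := by
  have hstab : ∀ b : β, stabilizer H b = ⊥ := fun b => by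
    rw [Subgroup.eq_bot_iff_forall]
    exact fun h hh => hfree h b hh
  have e2 : ∀ b : β, orbit H b ≃ H := fun b =>
    ((orbitEquivQuotientStabilizer H b).trans
      (Subgroup.quotientEquivOfEq (hstab b))).trans (QuotientGroup.quotientBot (G := H)).toEquiv
  have e : β ≃ (orbitRel.Quotient H β) × H :=
    (selfEquivSigmaOrbits H β).trans
      ((Equiv.sigmaCongrRight (fun ω : orbitRel.Quotient H β => e2 ω.out)).trans
        (Equiv.sigmaEquivProd _ H))
  rw [Nat.card_congr e, Nat.card_prod]
  exact Dvd.intro_left _ rfl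

lemma key_count {M : Type*} [CommGroup M] (d : ℕ) (hd : 0 < d)
    [Finite {x : M // orderOf x = d}] :
    Nat.card (ZMod d)ˣ ∣ Nat.card {x : M // orderOf x = d} := by
  haveI : NeZero d := ⟨hd.ne'⟩
  -- pow is well-defined mod d on elements of order d
  have hpow : ∀ (x : M), orderOf x = d → ∀ a b : ℕ, (a : ZMod d) = (b : ZMod d) → x ^ a = x ^ b := by
    intro x hx a b hab
    rw [pow_eq_pow_iff_modEq, hx]
    exact (ZMod.natCast_eq_natCast_iff a b d).mp hab
  have horder : ∀ (x : M) (hx : orderOf x = d) (v : (ZMod d)ˣ),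
      orderOf (x ^ ((v : ZMod d)).val) = d := by
    intro x hx v
    have hco : (orderOf x).Coprime ((v : ZMod d)).val := by
      rw [hx]; exact (ZMod.val_coe_unit_coprime v).symm
    rw [Nat.Coprime.orderOf_pow hco, hx]
  letI : SMul (ZMod d)ˣ {x : M // orderOf x = d} :=
    ⟨fun v x => ⟨x.1 ^ ((v : ZMod d)).val, horder x.1 x.2 v⟩⟩
  have smul_def : ∀ (v : (ZMod d)ˣ) (x : {x : M // orderOf x = d}),
      (v • x).1 = x.1 ^ ((v : ZMod d)).val := fun _ _ => rfl
  letI : MulAction (ZMod d)ˣ {x : M // orderOf x = d} :=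
    { one_smul := by
        intro x
        ext
        rw [smul_def]
        have : x.1 ^ (((1 : (ZMod d)ˣ) : ZMod d)).val = x.1 ^ 1 :=
          hpow x.1 x.2 _ 1 (by simp [ZMod.natCast_val])
        simpa using this
      mul_smul := by
        intro v w x
        ext
        rw [smul_def, smul_def, smul_def, ← pow_mul]
        refine hpow x.1 x.2 _ _ ?_
        push_cast [ZMod.natCast_val]
        simp [mul_comm] }
  refine free_card_dvd ?_
  intro v x hvx
  have h1 : x.1 ^ ((v : ZMod d)).val = x.1 ^ 1 := by
    have := congrArg Subtype.val hvx
    rw [smul_def] at this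
    simpa using this
  rw [pow_eq_pow_iff_modEq, x.2] at h1
  have : ((v : ZMod d).val : ZMod d) = ((1 : ℕ) : ZMod d) := (ZMod.natCast_eq_natCast_iff _ _ _).mpr h1
  ext
  rw [ZMod.natCast_val, ZMod.cast_id] at this
  simpa using this

lemma card_range_eq_orderOf {G F : Type*} [CommGroup G] [Finite G] [Field F]
    (χ : G →* Fˣ) : Nat.card χ.range = orderOf χ := by
  haveI : Finite χ.range := by
    have : (Set.range χ).Finite := Set.finite_range χ
    rw [← MonoidHom.coe_range] at this
    exact this
  have hcyc : IsCyclic χ.range := inferInstance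
  rw [← IsCyclic.exponent_eq_card]
  refine Nat.dvd_antisymm ?_ ?_
  · refine Monoid.exponent_dvd_of_forall_pow_eq_one fun x => ?_
    obtain ⟨x, g, hg⟩ := x
    apply Subtype.ext
    show x ^ orderOf χ = 1
    rw [← hg, ← MonoidHom.pow_apply, pow_orderOf_eq_one]
    rfl
  · rw [orderOf_dvd_iff_pow_eq_one]
    ext g
    have h1 : (⟨χ g, ⟨g, rfl⟩⟩ : χ.range) ^ Monoid.exponent χ.range = 1 :=
      Monoid.pow_exponent_eq_one _
    have h2 := congrArg Subtype.val h1
    rw [SubgroupClass.coe_pow] at h2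
    simpa using congrArg Units.val h2

/-- Let `G` be a finite abelian group of order coprime to the prime power `q = p ^ k`,
`F` an algebraically closed field of characteristic `p` (e.g. `\bar 𝔽_q`), and
`d ∣ exp(G)`.  Then `ord(q mod d)` divides the cardinality of
`I_d(G) = {χ : G →* Fˣ | the image of χ has order exactly d}`. -/
theorem ord_dvd_card_I_d
    (G : Type*) [CommGroup G] [Finite G] (p k q : ℕ) (hp : p.Prime) (hk : 0 < k)
    (hq : q = p ^ k) (hcop : Nat.Coprime q (Nat.card G))
    (F : Type*) [Field F] [IsAlgClosed F] [CharP F p]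
    (d : ℕ) (hd : d ∣ Monoid.exponent G) :
    orderOf ((q : ZMod d)) ∣ Nat.card {χ : G →* Fˣ // Nat.card (χ.range) = d} := by
  -- d is positive
  have hexp : 0 < Monoid.exponent G := Monoid.exponent_pos.mpr Monoid.ExponentExists.of_finite
  have hdpos : 0 < d := Nat.pos_of_dvd_of_pos hd hexp
  -- q is coprime to d
  have hqd : Nat.Coprime q d :=
    hcop.coprime_dvd_right (hd.trans Group.exponent_dvd_nat_card)
  -- rewrite the subtype
  have hiff : ∀ χ : G →* Fˣ, Nat.card χ.range = d ↔ orderOf χ = d := fun χ => by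
    rw [card_range_eq_orderOf]
  rw [Nat.card_congr (Equiv.subtypeEquivRight hiff)]
  -- the unit q mod d
  set u : (ZMod d)ˣ := ZMod.unitOfCoprime q hqd with hu
  have hcast : ((u : ZMod d)) = (q : ZMod d) := by simp [hu]
  have h1 : orderOf ((q : ZMod d)) = orderOf u := by rw [← hcast, orderOf_units]
  rw [h1]
  by_cases hfin : Finite {χ : G →* Fˣ // orderOf χ = d}
  · exact (orderOf_dvd_natCard u).trans (key_count d hdpos)
  · rw [not_finite_iff_infinite] at hfin
    rw [Nat.card_eq_zero_of_infinite]
    exact dvd_zero _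
end

section
/- Let r be a prime, G an elementary abelian group of order r^m, and q a prime power with r ∤ q. Set n = ord(q mod r). If n > 1, then up to equivalence G has exactly one irreducible 𝔽_q-representation of degree 1 and exactly (r^m − 1)/n irreducible 𝔽_q-representations of degree n, and no others. -/
/-!
Since `|G| = r ^ m` is invertible in `F`, the group algebra `F[G]` is semisimple (Maschke), hence
the product of the fields `F[G] ⧸ I` over its maximal ideals `I`, and `r ^ m = ∑ I, dim_F (F[G] ⧸ I)`.
Each `F[G] ⧸ I` is generated over `F` by the images of `G`, which are `r`-th roots of unity.
If they are all `1`, then `I` is the augmentation ideal and the quotient is `F`. Otherwise the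
quotient, of dimension `d`, contains a primitive `r`-th root of unity, so `r ∣ q ^ d - 1` and
`n ∣ d`; conversely the `n`-th power of Frobenius fixes every `r`-th root of unity, hence the whole
quotient, so `d ∣ n`. Thus `r ^ m = 1 + n · #{I | dim_F (F[G] ⧸ I) = n}`.
-/

open Module MonoidAlgebra

theorem Fintype.sum_eq_natCard_add_mul_natCard {ι : Type*} [Fintype ι] {D : ι → ℕ} {n : ℕ}
    (hD : ∀ i, D i = 1 ∨ D i = n) (hn : n ≠ 1) :
    ∑ i, D i = Nat.card {i // D i = 1} + n * Nat.card {i // D i = n} := by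
  classical
  have hne : Finset.univ.filter (fun i => ¬ D i = 1) = Finset.univ.filter (fun i => D i = n) :=
    Finset.filter_congr fun i _ => by rcases hD i with h | h <;> simp [h, hn, Ne.symm hn]
  rw [← Finset.sum_filter_add_sum_filter_not Finset.univ (fun i => D i = 1),
    Finset.sum_const_nat (fun i hi => (Finset.mem_filter.mp hi).2), hne,
    Finset.sum_const_nat (fun i hi => (Finset.mem_filter.mp hi).2),
    Nat.card_eq_fintype_card, Nat.card_eq_fintype_card, Fintype.card_subtype,
    Fintype.card_subtype, mul_one, mul_comm]

theorem MaximalSpectrum.natCard_subtype_asIdeal {R : Type*} [CommSemiring R]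
    (P : Ideal R → Prop) :
    Nat.card {J : MaximalSpectrum R // P J.asIdeal} =
      Nat.card {I : Ideal R // I.IsMaximal ∧ P I} :=
  Nat.card_congr <| ((MaximalSpectrum.equivSubtype R).subtypeEquiv fun _ => Iff.rfl).trans
    (Equiv.subtypeSubtypeEquivSubtypeInter _ _)

theorem Module.finrank_eq_sum_finrank_quotient_maximalSpectrum {F A : Type*} [Field F]
    [CommRing A] [Algebra F A] [Module.Finite F A] [IsReduced A] [Fintype (MaximalSpectrum A)] :
    finrank F A = ∑ J : MaximalSpectrum A, finrank F (A ⧸ J.asIdeal) := by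
  have := IsArtinianRing.of_finite F A
  rw [((IsArtinianRing.equivPi A).restrictScalars F).toLinearEquiv.finrank_eq,
    Module.finrank_pi_fintype]

namespace FiniteField

variable {F K : Type*} [Field F] [Fintype F] [Field K] [Algebra F K] [Finite K]

theorem natCast_ne_zero_of_coprime_card {a : ℕ} (h : a.Coprime (Fintype.card F)) :
    (a : F) ≠ 0 :=
  (ne_zero_or_ne_zero_of_nat_coprime h).resolve_right (not_not.mpr (cast_card_eq_zero F))

theorem orderOf_natCast_card_dvd_finrank {ζ : K} (hζ : ζ ≠ 0) :
    orderOf (Fintype.card F : ZMod (orderOf ζ)) ∣ finrank F K := by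
  apply orderOf_dvd_of_pow_eq_one
  have hpow : ζ ^ (Fintype.card F ^ finrank F K - 1) = 1 := by
    have := Fintype.ofFinite K
    rw [← Module.card_eq_pow_finrank]
    exact pow_card_sub_one_eq_one ζ hζ
  have hmod : 1 ≡ Fintype.card F ^ finrank F K [MOD orderOf ζ] :=
    (Nat.modEq_iff_dvd' (Nat.one_le_pow _ _ Fintype.card_pos)).mpr (orderOf_dvd_of_pow_eq_one hpow)
  exact_mod_cast ((ZMod.natCast_eq_natCast_iff _ _ _).mpr hmod).symm

theorem finrank_dvd_of_adjoin_eq_top {S : Set K} (hS : Algebra.adjoin F S = ⊤) {r n : ℕ}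
    (hSr : ∀ x ∈ S, x ^ r = 1) (hn : (Fintype.card F : ZMod r) ^ n = 1) :
    finrank F K ∣ n := by
  rw [← orderOf_frobeniusAlgHom]
  apply orderOf_dvd_of_pow_eq_one
  have hmod : Fintype.card F ^ n ≡ 1 [MOD r] := by
    rw [← ZMod.natCast_eq_natCast_iff]
    exact_mod_cast hn
  refine AlgHom.ext_of_adjoin_eq_top hS fun x hx => ?_
  simp only [AlgHom.coe_pow, coe_frobeniusAlgHom, pow_iterate, AlgHom.one_apply]
  rw [pow_eq_pow_mod _ (hSr x hx), hmod, ← pow_eq_pow_mod _ (hSr x hx), pow_one]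

theorem finrank_eq_orderOf_of_adjoin_eq_top {S : Set K} (hS : Algebra.adjoin F S = ⊤) {r : ℕ}
    (hr : r.Prime) (hSr : ∀ x ∈ S, x ^ r = 1) {ζ : K} (hζ : ζ ^ r = 1) (hζ1 : ζ ≠ 1) :
    finrank F K = orderOf (Fintype.card F : ZMod r) := by
  have : Fact r.Prime := ⟨hr⟩
  have hζ0 : ζ ≠ 0 := by
    rintro rfl
    rw [zero_pow hr.ne_zero] at hζ
    exact zero_ne_one hζ
  have hdvd := orderOf_natCast_card_dvd_finrank (F := F) hζ0
  rw [orderOf_eq_prime hζ hζ1] at hdvd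
  exact Nat.dvd_antisymm (finrank_dvd_of_adjoin_eq_top hS hSr (pow_orderOf_eq_one _)) hdvd

end FiniteField

namespace MonoidAlgebra

section Adjoin

variable {R M : Type*} [CommSemiring R] [Monoid M]

theorem adjoin_range_of : Algebra.adjoin R (Set.range (of R M)) = ⊤ := by
  refine Algebra.eq_top_iff.mpr fun x => ?_
  induction x using MonoidAlgebra.induction_on with
  | of g => exact Algebra.subset_adjoin (Set.mem_range_self g)
  | add x y hx hy => exact add_mem hx hy
  | smul c x hx => exact Subalgebra.smul_mem _ hx c

theorem adjoin_range_comp_of_eq_top {A : Type*} [Semiring A] [Algebra R A]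
    {f : MonoidAlgebra R M →ₐ[R] A} (hf : Function.Surjective f) :
    Algebra.adjoin R (Set.range (f ∘ of R M)) = ⊤ := by
  rw [Set.range_comp, ← AlgHom.map_adjoin, adjoin_range_of, Algebra.map_top,
    (AlgHom.range_eq_top f).mpr hf]

end Adjoin

section Augmentation

variable {F G : Type*} [Field F] [CommMonoid G]

variable (F G) in
noncomputable def augmentation : MonoidAlgebra F G →ₐ[F] F := lift F F G 1

theorem augmentation_of (g : G) : augmentation F G (of F G g) = 1 := lift_of _ g

theorem augmentation_surjective : Function.Surjective (augmentation F G) := fun c =>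
  ⟨algebraMap F _ c, AlgHom.commutes _ c⟩

theorem isMaximal_ker_augmentation : (RingHom.ker (augmentation F G)).IsMaximal :=
  RingHom.ker_isMaximal_of_surjective _ augmentation_surjective

theorem finrank_quotient_ker_augmentation :
    finrank F (MonoidAlgebra F G ⧸ RingHom.ker (augmentation F G)) = 1 := by
  rw [(Ideal.quotientKerAlgEquivOfSurjective augmentation_surjective).toLinearEquiv.finrank_eq,
    finrank_self]

theorem eq_ker_augmentation_of_forall_mk_of_eq_one (I : Ideal (MonoidAlgebra F G)) [I.IsMaximal]
    (h : ∀ g, Ideal.Quotient.mk I (of F G g) = 1) : I = RingHom.ker (augmentation F G) := by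
  have hfactor : Ideal.Quotient.mkₐ F I = (Algebra.ofId F _).comp (augmentation F G) :=
    AlgHom.ext_of_adjoin_eq_top adjoin_range_of <| by
      rintro - ⟨g, rfl⟩
      simp only [AlgHom.comp_apply, Ideal.Quotient.mkₐ_eq_mk, augmentation_of, map_one, h g]
  refine (isMaximal_ker_augmentation.eq_of_le (Ideal.IsMaximal.ne_top ‹_›) fun x hx => ?_).symm
  rw [← Ideal.Quotient.eq_zero_iff_mem, ← Ideal.Quotient.mkₐ_eq_mk F, hfactor, AlgHom.comp_apply,
    RingHom.mem_ker.mp hx, map_zero]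

theorem finrank_quotient_eq_orderOf [Fintype F] [Finite G] {r : ℕ} (hr : r.Prime)
    (hG : ∀ g : G, g ^ r = 1) (I : Ideal (MonoidAlgebra F G)) [I.IsMaximal]
    (hI : I ≠ RingHom.ker (augmentation F G)) :
    finrank F (MonoidAlgebra F G ⧸ I) = orderOf (Fintype.card F : ZMod r) := by
  let := Ideal.Quotient.field I
  have : Finite (MonoidAlgebra F G ⧸ I) := Module.finite_of_finite F
  obtain ⟨g, hg⟩ := not_forall.mp (mt (eq_ker_augmentation_of_forall_mk_of_eq_one I) hI)
  refine FiniteField.finrank_eq_orderOf_of_adjoin_eq_top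
    (adjoin_range_comp_of_eq_top (Ideal.Quotient.mkₐ_surjective F I)) hr ?_
    (ζ := Ideal.Quotient.mk I (of F G g)) (by rw [← map_pow, ← map_pow, hG, map_one, map_one]) hg
  rintro - ⟨g, rfl⟩
  simp only [Function.comp_apply, ← map_pow, hG, map_one]

theorem finrank_quotient_eq_one_iff [Fintype F] [Finite G] {r : ℕ} (hr : r.Prime)
    (hG : ∀ g : G, g ^ r = 1) (hq : 1 < orderOf (Fintype.card F : ZMod r))
    (I : Ideal (MonoidAlgebra F G)) [I.IsMaximal] :
    finrank F (MonoidAlgebra F G ⧸ I) = 1 ↔ I = RingHom.ker (augmentation F G) := by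
  refine ⟨fun h => by_contra fun hI => ?_, by rintro rfl; exact finrank_quotient_ker_augmentation⟩
  rw [finrank_quotient_eq_orderOf hr hG I hI] at h
  omega

end Augmentation

theorem card_eq_sum_finrank_quotient_maximalSpectrum (F : Type*) {G : Type*} [Field F]
    [CommGroup G] [Fintype G] [NeZero (Nat.card G : F)] [Fintype (MaximalSpectrum (MonoidAlgebra F G))] :
    Fintype.card G = ∑ J : MaximalSpectrum (MonoidAlgebra F G),
      finrank F (MonoidAlgebra F G ⧸ J.asIdeal) :=
  (finrank_eq_card_basis (basis G F)).symm.trans finrank_eq_sum_finrank_quotient_maximalSpectrum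

end MonoidAlgebra

theorem elementary_abelian_irreducibles_general
    (r m : ℕ) (hr : r.Prime)
    (G : Type*) [CommGroup G] [Fintype G] (hcard : Fintype.card G = r ^ m)
    (hG : ∀ g : G, g ^ r = 1)
    (q : ℕ) (hrq : ¬ r ∣ q)
    (F : Type*) [Field F] [Fintype F] (hF : Fintype.card F = q)
    (n : ℕ) (hn : n = orderOf ((q : ZMod r))) (hn1 : 1 < n) :
    Nat.card {I : Ideal (MonoidAlgebra F G) //
        I.IsMaximal ∧ Module.finrank F (MonoidAlgebra F G ⧸ I) = 1} = 1 ∧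
      Nat.card {I : Ideal (MonoidAlgebra F G) //
        I.IsMaximal ∧ Module.finrank F (MonoidAlgebra F G ⧸ I) = n} = (r ^ m - 1) / n ∧
      ∀ I : Ideal (MonoidAlgebra F G), I.IsMaximal →
        Module.finrank F (MonoidAlgebra F G ⧸ I) = 1 ∨
          Module.finrank F (MonoidAlgebra F G ⧸ I) = n := by
  have : NeZero (Nat.card G : F) := ⟨by
    rw [Nat.card_eq_fintype_card, hcard]
    exact FiniteField.natCast_ne_zero_of_coprime_card
      (hF ▸ ((Nat.Prime.coprime_iff_not_dvd hr).mpr hrq).pow_left m)⟩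
  have : Fintype (MaximalSpectrum (MonoidAlgebra F G)) := Fintype.ofFinite _
  set d := fun I : Ideal (MonoidAlgebra F G) => finrank F (MonoidAlgebra F G ⧸ I)
  set aug := RingHom.ker (augmentation F G)
  have hnq : n = orderOf (Fintype.card F : ZMod r) := hF ▸ hn
  have hdeg_one : ∀ I, I.IsMaximal → (d I = 1 ↔ I = aug) := fun I _ =>
    finrank_quotient_eq_one_iff hr hG (hnq ▸ hn1) I
  have hdeg : ∀ I, I.IsMaximal → d I = 1 ∨ d I = n := fun I hI =>
    (em (I = aug)).imp (hdeg_one I hI).2 fun hne => hnq ▸ finrank_quotient_eq_orderOf hr hG I hne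
  have hcount_one : Nat.card {I // I.IsMaximal ∧ d I = 1} = 1 :=
    Nat.card_eq_one_iff_exists.mpr ⟨⟨aug, isMaximal_ker_augmentation,
      finrank_quotient_ker_augmentation⟩, fun J => Subtype.ext ((hdeg_one J.1 J.2.1).1 J.2.2)⟩
  have hsum : r ^ m = 1 + n * Nat.card {I // I.IsMaximal ∧ d I = n} := by
    rw [← hcard, card_eq_sum_finrank_quotient_maximalSpectrum F,
      Fintype.sum_eq_natCard_add_mul_natCard
        (fun J : MaximalSpectrum (MonoidAlgebra F G) => hdeg J.asIdeal J.isMaximal) hn1.ne',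
      MaximalSpectrum.natCard_subtype_asIdeal (d · = 1),
      MaximalSpectrum.natCard_subtype_asIdeal (d · = n), hcount_one]
  refine ⟨hcount_one, ?_, hdeg⟩
  rw [hsum, Nat.add_sub_cancel_left, Nat.mul_div_cancel_left _ (by omega)]

/-- Let `r` be a prime, `G` an elementary abelian group of order `r ^ m`, `q` a prime
power with `r ∤ q`, `F` the field with `q` elements, and `n = ord(q mod r) > 1`.
Counting irreducible `F`-representations of `G` up to equivalence as maximal ideals
of the commutative algebra `FG` (the degree of the representation attached to `I`
being `dim_F FG/I`): `G` has exactly one irreducible representation of degree `1`,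
exactly `(r^m − 1)/n` of degree `n`, and no others. -/
theorem elementary_abelian_irreducibles
    (r m : ℕ) (hr : r.Prime)
    (G : Type*) [CommGroup G] [Fintype G] (hcard : Fintype.card G = r ^ m)
    (hG : ∀ g : G, g ^ r = 1)
    (p k q : ℕ) (hp : p.Prime) (hk : 0 < k) (hq : q = p ^ k) (hrq : ¬ r ∣ q)
    (F : Type*) [Field F] [Fintype F] (hF : Fintype.card F = q)
    (n : ℕ) (hn : n = orderOf ((q : ZMod r))) (hn1 : 1 < n) :
    Nat.card {I : Ideal (MonoidAlgebra F G) //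
        I.IsMaximal ∧ Module.finrank F (MonoidAlgebra F G ⧸ I) = 1} = 1 ∧
      Nat.card {I : Ideal (MonoidAlgebra F G) //
        I.IsMaximal ∧ Module.finrank F (MonoidAlgebra F G ⧸ I) = n} = (r ^ m - 1) / n ∧
      ∀ I : Ideal (MonoidAlgebra F G), I.IsMaximal →
        Module.finrank F (MonoidAlgebra F G ⧸ I) = 1 ∨
          Module.finrank F (MonoidAlgebra F G ⧸ I) = n :=
  elementary_abelian_irreducibles_general r m hr G hcard hG q hrq F hF n hn hn1
end
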